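/- arXiv:1610.02617 — 7 statements merged into one kernel-verified Lean document; each statement's English description precedes it below -/
import Mathlib

section
/- Let {w(t)} ⊂ ℝ^J_+ satisfy w_j(t+1) = max(w_j(t) + (1/V)g_j(y(t)), 0) for all t and j. If each g_j is convex on a convex set Y containing all y(t), then for every T ≥ 1 and every j: g_j(ȳ(T)) ≤ (V/T)(w_j(T) - w_j(0)), where ȳ(T) = (1/T)∑_{t=0}^{T-1} y(t). -/
/-!
A virtual queue `w (t + 1) = max (w t + a t) 0` grows by at least `a t` at each step, so by
telescoping `∑_{t<T} a t ≤ w T - w 0`. Applied to `a t = g (y t) / V` and combined with Jensen's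
inequality for the uniform average `ȳ(T)`, this gives `g ȳ(T) ≤ (V / T) (w T - w 0)`.
-/

open Finset

theorem Finset.sum_range_le_sub_of_le_sub {M : Type*} [AddCommGroup M] [PartialOrder M]
    [IsOrderedAddMonoid M] {a f : ℕ → M} (h : ∀ t, a t ≤ f (t + 1) - f t) (T : ℕ) :
    ∑ t ∈ range T, a t ≤ f T - f 0 :=
  (sum_le_sum fun t _ => h t).trans_eq (sum_range_sub f T)

theorem sum_range_le_sub_of_eq_max_zero {M : Type*} [AddCommGroup M] [LinearOrder M]
    [IsOrderedAddMonoid M] {a w : ℕ → M} (hw : ∀ t, w (t + 1) = max (w t + a t) 0) (T : ℕ) :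
    ∑ t ∈ range T, a t ≤ w T - w 0 :=
  sum_range_le_sub_of_le_sub (fun t => le_sub_iff_add_le'.2 (hw t ▸ le_max_left _ _)) T

theorem ConvexOn.map_inv_card_smul_sum_le {𝕜 E β ι : Type*} [Field 𝕜] [LinearOrder 𝕜]
    [IsStrictOrderedRing 𝕜] [AddCommGroup E] [AddCommGroup β] [PartialOrder β]
    [IsOrderedAddMonoid β] [Module 𝕜 E] [Module 𝕜 β] [IsStrictOrderedModule 𝕜 β]
    {s : Set E} {f : E → β} {t : Finset ι} {p : ι → E} (hf : ConvexOn 𝕜 s f)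
    (ht : t.Nonempty) (hmem : ∀ i ∈ t, p i ∈ s) :
    f ((#t : 𝕜)⁻¹ • ∑ i ∈ t, p i) ≤ (#t : 𝕜)⁻¹ • ∑ i ∈ t, f (p i) := by
  have hcard : (#t : 𝕜) ≠ 0 := by exact_mod_cast ht.card_pos.ne'
  simpa only [smul_sum] using hf.map_sum_le (fun _ _ => by positivity)
    (by rw [sum_const, nsmul_eq_mul, mul_inv_cancel₀ hcard]) hmem

theorem stmt_3_general (I J : ℕ) (V : ℝ) (hV : 0 < V)
    (Y : Set (EuclideanSpace ℝ (Fin I)))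
    (g : Fin J → EuclideanSpace ℝ (Fin I) → ℝ)
    (hg : ∀ j, ConvexOn ℝ Y (g j))
    (y : ℕ → EuclideanSpace ℝ (Fin I)) (hy : ∀ t, y t ∈ Y)
    (w : ℕ → Fin J → ℝ)
    (hw : ∀ t j, w (t + 1) j = max (w t j + V⁻¹ * g j (y t)) 0) :
    ∀ T : ℕ, 1 ≤ T → ∀ j,
      g j ((T : ℝ)⁻¹ • ∑ t ∈ Finset.range T, y t) ≤ (V / (T : ℝ)) * (w T j - w 0 j) := by
  intro T hT j
  have hqueue : ∑ t ∈ range T, g j (y t) ≤ V * (w T j - w 0 j) := by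
    rw [← inv_mul_le_iff₀ hV, mul_sum]
    exact sum_range_le_sub_of_eq_max_zero (w := fun t => w t j) (fun t => hw t j) T
  have hjensen := (hg j).map_inv_card_smul_sum_le ⟨0, mem_range.2 hT⟩ (fun t _ => hy t)
  rw [card_range, smul_eq_mul] at hjensen
  calc g j ((T : ℝ)⁻¹ • ∑ t ∈ range T, y t)
      ≤ (T : ℝ)⁻¹ * ∑ t ∈ range T, g j (y t) := hjensen
    _ ≤ (T : ℝ)⁻¹ * (V * (w T j - w 0 j)) := by gcongr
    _ = (V / T) * (w T j - w 0 j) := by ring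

theorem stmt_3 (I J : ℕ) (V : ℝ) (hV : 0 < V)
    (Y : Set (EuclideanSpace ℝ (Fin I))) (hY : Convex ℝ Y)
    (g : Fin J → EuclideanSpace ℝ (Fin I) → ℝ)
    (hg : ∀ j, ConvexOn ℝ Y (g j))
    (y : ℕ → EuclideanSpace ℝ (Fin I)) (hy : ∀ t, y t ∈ Y)
    (w : ℕ → Fin J → ℝ)
    (hw : ∀ t j, w (t + 1) j = max (w t j + V⁻¹ * g j (y t)) 0) :
    ∀ T : ℕ, 1 ≤ T → ∀ j,
      g j ((T : ℝ)⁻¹ • ∑ t ∈ Finset.range T, y t) ≤ (V / (T : ℝ)) * (w T j - w 0 j) :=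
  stmt_3_general I J V hV Y g hg y hy w hw
end

section
/- Suppose f is convex and M-Lipschitz on Y, y(t) ∈ Y and x(t) ∈ conv(X) ⊆ Y for all t, the per-slot bound (V/2)(||λ(t+1)||² - ||λ(t)||²) + f(y(t)) ≤ C/V + f_opt holds, and z(t+1) = z(t) + (1/V)(x(t)-y(t)). Then for all T ≥ 1: f(x̄(T)) - f_opt ≤ (V/(2T))(||λ(0)||² - ||λ(T)||²) + C/V + (VM/T)||z(T) - z(0)||. -/
theorem stmt_5 (I J : ℕ) (V C M fopt : ℝ) (hV : 0 < V) (hC : 0 < C) (hM : 0 < M)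
    (Y : Set (EuclideanSpace ℝ (Fin I))) (hY : Convex ℝ Y)
    (X : Set (EuclideanSpace ℝ (Fin I))) (hXY : convexHull ℝ X ⊆ Y)
    (f : EuclideanSpace ℝ (Fin I) → ℝ) (hf : ConvexOn ℝ Y f)
    (hlip : ∀ a ∈ Y, ∀ b ∈ Y, |f a - f b| ≤ M * ‖a - b‖)
    (x y : ℕ → EuclideanSpace ℝ (Fin I))
    (hx : ∀ t, x t ∈ convexHull ℝ X) (hy : ∀ t, y t ∈ Y)
    (w : ℕ → EuclideanSpace ℝ (Fin J)) (z : ℕ → EuclideanSpace ℝ (Fin I))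
    (hz : ∀ t, z (t + 1) = z t + V⁻¹ • (x t - y t))
    (hdrift : ∀ t, (V / 2) * ((‖w (t + 1)‖ ^ 2 + ‖z (t + 1)‖ ^ 2) -
        (‖w t‖ ^ 2 + ‖z t‖ ^ 2)) + f (y t) ≤ C / V + fopt) :
    ∀ T : ℕ, 1 ≤ T →
      f ((T : ℝ)⁻¹ • ∑ t ∈ Finset.range T, x t) - fopt ≤
        (V / (2 * T)) * ((‖w 0‖ ^ 2 + ‖z 0‖ ^ 2) - (‖w T‖ ^ 2 + ‖z T‖ ^ 2)) + C / V +
          (V * M / T) * ‖z T - z 0‖ := by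
  intro T hT
  have hT0 : (0:ℝ) < T := by exact_mod_cast hT
  set xb := (T:ℝ)⁻¹ • ∑ t ∈ Finset.range T, x t with hxbdef
  set yb := (T:ℝ)⁻¹ • ∑ t ∈ Finset.range T, y t with hybdef
  have hwpos : ∀ i ∈ Finset.range T, (0:ℝ) ≤ (T:ℝ)⁻¹ := fun _ _ => by positivity
  have hwsum : ∑ _i ∈ Finset.range T, (T:ℝ)⁻¹ = 1 := by
    rw [Finset.sum_const, Finset.card_range, nsmul_eq_mul]
    field_simp
  have hxb : xb ∈ Y := by
    apply hXY
    have := (convex_convexHull ℝ X).sum_mem hwpos hwsum (fun i _ => hx i)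
    simpa [hxbdef, Finset.smul_sum] using this
  have hyb : yb ∈ Y := by
    have := hY.sum_mem hwpos hwsum (fun i _ => hy i)
    simpa [hybdef, Finset.smul_sum] using this
  have hjensen : f yb ≤ (T:ℝ)⁻¹ * ∑ t ∈ Finset.range T, f (y t) := by
    have := hf.map_sum_le hwpos hwsum (fun i _ => hy i)
    calc f yb = f (∑ i ∈ Finset.range T, (T:ℝ)⁻¹ • y i) := by
          rw [hybdef, Finset.smul_sum]
      _ ≤ ∑ i ∈ Finset.range T, (T:ℝ)⁻¹ * f (y i) := this
      _ = (T:ℝ)⁻¹ * ∑ t ∈ Finset.range T, f (y t) := by rw [Finset.mul_sum]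
  -- telescoping of z
  have hzT : z T - z 0 = V⁻¹ • ∑ t ∈ Finset.range T, (x t - y t) := by
    rw [← Finset.sum_range_sub z T, Finset.smul_sum]
    refine Finset.sum_congr rfl fun t _ => ?_
    rw [hz t]; abel
  have hdiff : xb - yb = ((T:ℝ)⁻¹ * V) • (z T - z 0) := by
    rw [hzT, smul_smul, mul_assoc, mul_inv_cancel₀ hV.ne', mul_one,
      hxbdef, hybdef, ← smul_sub, ← Finset.sum_sub_distrib]
  have hnorm : ‖xb - yb‖ = (T:ℝ)⁻¹ * V * ‖z T - z 0‖ := by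
    rw [hdiff, norm_smul, Real.norm_eq_abs, abs_of_pos (by positivity)]
  -- Lipschitz
  have hlipb : f xb ≤ f yb + M * ((T:ℝ)⁻¹ * V * ‖z T - z 0‖) := by
    have h := hlip xb hxb yb hyb
    rw [abs_le] at h
    linarith [h.2, hnorm ▸ h.2]
  -- sum drift
  have hsum : (V / 2) * ((‖w T‖ ^ 2 + ‖z T‖ ^ 2) - (‖w 0‖ ^ 2 + ‖z 0‖ ^ 2)) +
      ∑ t ∈ Finset.range T, f (y t) ≤ T * (C / V + fopt) := by
    have h := Finset.sum_le_sum (fun t (_ : t ∈ Finset.range T) => hdrift t)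
    rw [Finset.sum_add_distrib, Finset.sum_const, Finset.card_range, nsmul_eq_mul] at h
    have htel : ∑ t ∈ Finset.range T,
        (V / 2) * ((‖w (t+1)‖ ^ 2 + ‖z (t+1)‖ ^ 2) - (‖w t‖ ^ 2 + ‖z t‖ ^ 2)) =
        (V / 2) * ((‖w T‖ ^ 2 + ‖z T‖ ^ 2) - (‖w 0‖ ^ 2 + ‖z 0‖ ^ 2)) := by
      rw [← Finset.mul_sum, Finset.sum_range_sub (fun t => ‖w t‖ ^ 2 + ‖z t‖ ^ 2)]
    rw [htel] at h
    linarith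
  -- divide by T
  have havg : (T:ℝ)⁻¹ * ∑ t ∈ Finset.range T, f (y t) ≤
      (V / (2 * T)) * ((‖w 0‖ ^ 2 + ‖z 0‖ ^ 2) - (‖w T‖ ^ 2 + ‖z T‖ ^ 2)) + (C / V + fopt) := by
    have h := mul_le_mul_of_nonneg_left hsum (le_of_lt (inv_pos.mpr hT0))
    have hTne : (T:ℝ) ≠ 0 := hT0.ne'
    rw [mul_add, inv_mul_cancel_left₀ hTne] at h
    have : (V / (2 * T)) * ((‖w 0‖ ^ 2 + ‖z 0‖ ^ 2) - (‖w T‖ ^ 2 + ‖z T‖ ^ 2)) =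
        -((T:ℝ)⁻¹ * ((V / 2) * ((‖w T‖ ^ 2 + ‖z T‖ ^ 2) - (‖w 0‖ ^ 2 + ‖z 0‖ ^ 2)))) := by
      field_simp; ring
    rw [this]
    linarith
  have hfinal : M * ((T:ℝ)⁻¹ * V * ‖z T - z 0‖) = (V * M / T) * ‖z T - z 0‖ := by
    field_simp
  linarith [hlipb, hjensen, havg, hfinal ▸ hlipb]
end

section
/- Suppose each g_j is convex and M-Lipschitz on Y, w_j(t+1) = max(w_j(t) + (1/V)g_j(y(t)), 0), z(t+1) = z(t) + (1/V)(x(t) - y(t)), with x(t), y(t) ∈ Y. Then for all T ≥ 1 and each j: g_j(x̄(T)) ≤ (V/T)|w_j(T) - w_j(0)| + (VM/T)||z(T) - z(0)||. -/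
theorem stmt_6 (I J : ℕ) (V M : ℝ) (hV : 0 < V) (hM : 0 < M)
    (Y : Set (EuclideanSpace ℝ (Fin I))) (hY : Convex ℝ Y)
    (g : Fin J → EuclideanSpace ℝ (Fin I) → ℝ)
    (hg : ∀ j, ConvexOn ℝ Y (g j))
    (hlip : ∀ j, ∀ a ∈ Y, ∀ b ∈ Y, |g j a - g j b| ≤ M * ‖a - b‖)
    (x y : ℕ → EuclideanSpace ℝ (Fin I))
    (hx : ∀ t, x t ∈ Y) (hy : ∀ t, y t ∈ Y)
    (w : ℕ → Fin J → ℝ) (hwpos : ∀ t j, 0 ≤ w t j)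
    (z : ℕ → EuclideanSpace ℝ (Fin I))
    (hw : ∀ t j, w (t + 1) j = max (w t j + V⁻¹ * g j (y t)) 0)
    (hz : ∀ t, z (t + 1) = z t + V⁻¹ • (x t - y t)) :
    ∀ T : ℕ, 1 ≤ T → ∀ j,
      g j ((T : ℝ)⁻¹ • ∑ t ∈ Finset.range T, x t) ≤
        (V / (T : ℝ)) * |w T j - w 0 j| + (V * M / T) * ‖z T - z 0‖ := by
  intro T hT j
  have hT0 : (0:ℝ) < T := by exact_mod_cast hT
  set xb := (T : ℝ)⁻¹ • ∑ t ∈ Finset.range T, x t with hxb_def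
  set yb := (T : ℝ)⁻¹ • ∑ t ∈ Finset.range T, y t with hyb_def
  have hsumw : ∑ _t ∈ Finset.range T, ((T:ℝ)⁻¹) = 1 := by
    simp [Finset.sum_const, mul_inv_cancel₀ hT0.ne']
  have hxbY : xb ∈ Y := by
    have := hY.sum_mem (t := Finset.range T) (w := fun _ => (T:ℝ)⁻¹)
      (fun i _ => by positivity) hsumw (fun i _ => hx i)
    simpa [hxb_def, Finset.smul_sum] using this
  have hybY : yb ∈ Y := by
    have := hY.sum_mem (t := Finset.range T) (w := fun _ => (T:ℝ)⁻¹)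
      (fun i _ => by positivity) hsumw (fun i _ => hy i)
    simpa [hyb_def, Finset.smul_sum] using this
  -- Jensen
  have hjensen : g j yb ≤ (T:ℝ)⁻¹ * ∑ t ∈ Finset.range T, g j (y t) := by
    have := (hg j).map_sum_le (t := Finset.range T) (w := fun _ => (T:ℝ)⁻¹)
      (p := y) (fun i _ => by positivity) hsumw (fun i _ => hy i)
    calc g j yb ≤ ∑ t ∈ Finset.range T, (T:ℝ)⁻¹ * g j (y t) := by
          simpa [hyb_def, Finset.smul_sum] using this
      _ = (T:ℝ)⁻¹ * ∑ t ∈ Finset.range T, g j (y t) := by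
          rw [Finset.mul_sum]
  -- queue bound
  have hwsum : ∑ t ∈ Finset.range T, g j (y t) ≤ V * |w T j - w 0 j| := by
    have h1 : ∑ t ∈ Finset.range T, V⁻¹ * g j (y t) ≤ w T j - w 0 j := by
      have := Finset.sum_range_sub (fun t => w t j) T
      rw [← this]
      refine Finset.sum_le_sum fun t _ => ?_
      have := hw t j
      have hle : w t j + V⁻¹ * g j (y t) ≤ w (t+1) j := by
        rw [this]; exact le_max_left _ _
      linarith
    have h2 : V⁻¹ * ∑ t ∈ Finset.range T, g j (y t) ≤ w T j - w 0 j := by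
      rw [Finset.mul_sum]; exact h1
    have h3 : ∑ t ∈ Finset.range T, g j (y t) ≤ V * (w T j - w 0 j) := by
      have := mul_le_mul_of_nonneg_left h2 hV.le
      rwa [mul_inv_cancel_left₀ hV.ne'] at this
    exact h3.trans (by
      have : w T j - w 0 j ≤ |w T j - w 0 j| := le_abs_self _
      nlinarith)
  -- z telescope
  have hztel : (∑ t ∈ Finset.range T, (x t - y t)) = V • (z T - z 0) := by
    have h1 : z T - z 0 = ∑ t ∈ Finset.range T, (z (t+1) - z t) := by
      rw [Finset.sum_range_sub (fun t => z t) T]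
    have h2 : z T - z 0 = V⁻¹ • ∑ t ∈ Finset.range T, (x t - y t) := by
      rw [h1, Finset.smul_sum]
      refine Finset.sum_congr rfl fun t _ => ?_
      rw [hz t]; abel
    rw [h2, smul_smul, mul_inv_cancel₀ hV.ne', one_smul]
  have hdiff : xb - yb = ((T:ℝ)⁻¹ * V) • (z T - z 0) := by
    rw [hxb_def, hyb_def, ← smul_sub, ← Finset.sum_sub_distrib, hztel, smul_smul]
  have hnorm : ‖xb - yb‖ = (T:ℝ)⁻¹ * V * ‖z T - z 0‖ := by
    rw [hdiff, norm_smul]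
    congr 1
    rw [Real.norm_eq_abs, abs_of_pos (by positivity)]
  -- Lipschitz
  have hlipb : g j xb ≤ g j yb + M * ‖xb - yb‖ := by
    have := hlip j xb hxbY yb hybY
    have := (abs_le.mp this).2
    linarith
  have : g j xb ≤ (T:ℝ)⁻¹ * (V * |w T j - w 0 j|) + M * ((T:ℝ)⁻¹ * V * ‖z T - z 0‖) := by
    have h4 : g j yb ≤ (T:ℝ)⁻¹ * (V * |w T j - w 0 j|) :=
      hjensen.trans (mul_le_mul_of_nonneg_left hwsum (by positivity))
    rw [hnorm] at hlipb
    linarith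
  calc g j xb ≤ _ := this
    _ = (V / (T : ℝ)) * |w T j - w 0 j| + (V * M / T) * ‖z T - z 0‖ := by
        field_simp
end

section
/- Suppose for all t: (V/2)(||λ(t+1)||² - ||λ(t)||²) + f(y(t)) ≤ C/V + F - η||λ(t)||, with V ≥ 1, λ(0) = 0, f(y(t)) ≥ f_min for all t, and ||λ(t+1) - λ(t)|| ≤ √(2C)/V for all t. Then ||λ(t)|| ≤ (C + F - f_min)/η + √(2C) for all t. -/
/-!
Once `‖λ(t)‖` exceeds `B = (C + F - f_min)/η`, the right-hand side of the drift inequality is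
negative (using `C/V ≤ C` and `f(y(t)) ≥ f_min`), so `‖λ(t+1)‖ ≤ ‖λ(t)‖`. Below `B`, a single
step adds at most `√(2C)/V ≤ √(2C)`. Hence `‖λ(t)‖` can never climb above `B + √(2C)`.
-/

theorem forall_le_add_of_succ_le_add_of_lt {r : ℕ → ℝ} {B δ : ℝ} (h0 : r 0 ≤ B + δ)
    (hstep : ∀ t, r (t + 1) ≤ r t + δ) (hdec : ∀ t, B < r t → r (t + 1) ≤ r t) :
    ∀ t, r t ≤ B + δ := by
  intro t
  induction t with
  | zero => exact h0
  | succ t ih =>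
    rcases le_or_gt (r t) B with hle | hgt
    · linarith [hstep t]
    · exact (hdec t hgt).trans ih

theorem le_of_drift_le_of_lt {V a b f K η : ℝ} (hV : 0 < V) (ha : 0 ≤ a) (hb : 0 ≤ b)
    (hdrift : V / 2 * (b ^ 2 - a ^ 2) + f ≤ K - η * a) (hlt : K - f < η * a) : b ≤ a := by
  have hsq : b ^ 2 < a ^ 2 := by nlinarith
  exact (pow_lt_pow_iff_left₀ hb ha two_ne_zero).mp hsq |>.le

theorem stmt_7 (n : ℕ) (V C F η fmin : ℝ) (hV : 1 ≤ V) (hC : 0 < C) (hη : 0 < η)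
    (lam : ℕ → EuclideanSpace ℝ (Fin n)) (fy : ℕ → ℝ)
    (hlam0 : lam 0 = 0)
    (hfmin : ∀ t, fmin ≤ fy t)
    (hdrift : ∀ t, (V / 2) * (‖lam (t + 1)‖ ^ 2 - ‖lam t‖ ^ 2) + fy t ≤
        C / V + F - η * ‖lam t‖)
    (hstep : ∀ t, ‖lam (t + 1) - lam t‖ ≤ Real.sqrt (2 * C) / V) :
    ∀ t, ‖lam t‖ ≤ (C + F - fmin) / η + Real.sqrt (2 * C) := by
  have hV0 : 0 < V := by linarith
  have hCV : C / V ≤ C := div_le_self hC.le hV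
  have hslack : ∀ t, C / V + F - fy t ≤ C + F - fmin := fun t => by linarith [hfmin t]
  have hB : 0 ≤ (C + F - fmin) / η := by
    have h0 := hdrift 0
    simp only [hlam0, norm_zero, mul_zero, sub_zero, ne_eq, OfNat.ofNat_ne_zero,
      not_false_eq_true, zero_pow] at h0
    have : 0 ≤ V / 2 * ‖lam 1‖ ^ 2 := by positivity
    exact div_nonneg (by linarith [hslack 0]) hη.le
  refine forall_le_add_of_succ_le_add_of_lt (by simp [hlam0, hB, add_nonneg])
    (fun t => ?_) (fun t ht => ?_)
  · calc ‖lam (t + 1)‖ ≤ ‖lam t‖ + ‖lam (t + 1) - lam t‖ := norm_le_norm_add_norm_sub' _ _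
      _ ≤ ‖lam t‖ + Real.sqrt (2 * C) := by
        gcongr
        exact (hstep t).trans (div_le_self (Real.sqrt_nonneg _) hV)
  · refine le_of_drift_le_of_lt hV0 (norm_nonneg _) (norm_nonneg _) (hdrift t) ?_
    exact (hslack t).trans_lt ((div_lt_iff₀' hη).mp ht)
end

section
/- Suppose ||λ(t+1) - λ*||² ≤ ||λ(t) - λ*||² + (2/V)(d(λ(t)) - d(λ*)) + 2C/V² holds, and d satisfies the locally-polyhedral bound d(λ*) ≥ d(λ) + L_p||λ - λ*|| for all λ ∈ Π. Then whenever ||λ(t) - λ*|| ≥ max(L_p/(2V), 2C/(V L_p)), it follows that ||λ(t+1) - λ*|| ≤ ||λ(t) - λ*|| - L_p/(2V). -/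
/-! Polyhedrality turns the drift term `(2/V)(d(λ) - d(λ*))` into `-(2 L_p/V)‖λ - λ*‖`; far from
`λ*` this dominates the constant `2C/V²` enough that the right-hand side of the drift inequality is
at most `(‖λ - λ*‖ - L_p/(2V))²`, and taking square roots gives the claim. -/

lemma le_sub_of_sq_le_of_drift {V C Lp r r' : ℝ} (hV : 0 < V) (hLp : 0 < Lp) (hr' : 0 ≤ r')
    (hdrift : r' ^ 2 ≤ r ^ 2 - 2 * Lp * r / V + 2 * C / V ^ 2)
    (hr_step : Lp / (2 * V) ≤ r) (hr_const : 2 * C / (V * Lp) ≤ r) :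
    r' ≤ r - Lp / (2 * V) := by
  have hconst : 2 * C / V ^ 2 ≤ Lp * r / V := by
    rw [div_le_iff₀ (by positivity)] at hr_const
    rw [div_le_div_iff₀ (by positivity) hV]
    nlinarith
  have hsq : r' ^ 2 ≤ (r - Lp / (2 * V)) ^ 2 :=
    calc r' ^ 2 ≤ r ^ 2 - 2 * Lp * r / V + 2 * C / V ^ 2 := hdrift
      _ ≤ r ^ 2 - Lp * r / V + Lp ^ 2 / (4 * V ^ 2) := by
        have : 0 ≤ Lp ^ 2 / (4 * V ^ 2) := by positivity
        have : 2 * Lp * r / V = Lp * r / V + Lp * r / V := by ring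
        linarith
      _ = (r - Lp / (2 * V)) ^ 2 := by field_simp; ring
  exact (pow_le_pow_iff_left₀ hr' (sub_nonneg.mpr hr_step) two_ne_zero).mp hsq

theorem stmt_9_general (n : ℕ) (V C Lp : ℝ) (hV : 0 < V) (hLp : 0 < Lp)
    (Pi : Set (EuclideanSpace ℝ (Fin n))) (d : EuclideanSpace ℝ (Fin n) → ℝ)
    (lam lam' lamstar : EuclideanSpace ℝ (Fin n))
    (hlam : lam ∈ Pi)
    (hrec : ‖lam' - lamstar‖ ^ 2 ≤ ‖lam - lamstar‖ ^ 2 +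
        (2 / V) * (d lam - d lamstar) + 2 * C / V ^ 2)
    (hpoly : ∀ μ ∈ Pi, d lamstar ≥ d μ + Lp * ‖μ - lamstar‖)
    (hfar : ‖lam - lamstar‖ ≥ max (Lp / (2 * V)) (2 * C / (V * Lp))) :
    ‖lam' - lamstar‖ ≤ ‖lam - lamstar‖ - Lp / (2 * V) := by
  have hgap : d lam - d lamstar ≤ -(Lp * ‖lam - lamstar‖) := by
    linarith [hpoly lam hlam]
  refine le_sub_of_sq_le_of_drift hV hLp (norm_nonneg _) ?_ (le_of_max_le_left hfar)
    (le_of_max_le_right hfar)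
  calc ‖lam' - lamstar‖ ^ 2
      ≤ ‖lam - lamstar‖ ^ 2 + (2 / V) * (d lam - d lamstar) + 2 * C / V ^ 2 := hrec
    _ ≤ ‖lam - lamstar‖ ^ 2 + (2 / V) * -(Lp * ‖lam - lamstar‖) + 2 * C / V ^ 2 := by
      gcongr
    _ = ‖lam - lamstar‖ ^ 2 - 2 * Lp * ‖lam - lamstar‖ / V + 2 * C / V ^ 2 := by ring

theorem stmt_9 (n : ℕ) (V C Lp : ℝ) (hV : 0 < V) (hC : 0 < C) (hLp : 0 < Lp)
    (Pi : Set (EuclideanSpace ℝ (Fin n))) (d : EuclideanSpace ℝ (Fin n) → ℝ)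
    (lam lam' lamstar : EuclideanSpace ℝ (Fin n))
    (hlam : lam ∈ Pi) (hlamstar : lamstar ∈ Pi)
    (hrec : ‖lam' - lamstar‖ ^ 2 ≤ ‖lam - lamstar‖ ^ 2 +
        (2 / V) * (d lam - d lamstar) + 2 * C / V ^ 2)
    (hpoly : ∀ μ ∈ Pi, d lamstar ≥ d μ + Lp * ‖μ - lamstar‖)
    (hfar : ‖lam - lamstar‖ ≥ max (Lp / (2 * V)) (2 * C / (V * Lp))) :
    ‖lam' - lamstar‖ ≤ ‖lam - lamstar‖ - Lp / (2 * V) :=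
  stmt_9_general n V C Lp hV hLp Pi d lam lam' lamstar hlam hrec hpoly hfar
end

section
/- Suppose ||λ(t+1) - λ*||² ≤ ||λ(t) - λ*||² + (2/V)(d(λ(t)) - d(λ*)) + 2C/V², and d satisfies the locally-smooth bound d(λ*) ≥ d(λ) + L_s||λ - λ*||² whenever ||λ - λ*|| ≤ S. Then whenever B_s(V) ≤ ||λ(t) - λ*|| ≤ S, where B_s(V) = max(1/V^{1.5}, (√V + √(V + 4 L_s C V))/(2 L_s V)), we have ||λ(t+1) - λ*|| ≤ ||λ(t) - λ*|| - 1/V^{1.5}. -/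
theorem stmt_12 (n : ℕ) (V C Ls S : ℝ) (hV : 0 < V) (hC : 0 < C) (hLs : 0 < Ls) (hS : 0 < S)
    (Pi : Set (EuclideanSpace ℝ (Fin n))) (d : EuclideanSpace ℝ (Fin n) → ℝ)
    (lam lam' lamstar : EuclideanSpace ℝ (Fin n))
    (hlam : lam ∈ Pi) (hlamstar : lamstar ∈ Pi)
    (hBS : max (1 / V ^ (1.5 : ℝ)) ((Real.sqrt V + Real.sqrt (V + 4 * Ls * C * V)) / (2 * Ls * V)) < S)
    (hrec : ‖lam' - lamstar‖ ^ 2 ≤ ‖lam - lamstar‖ ^ 2 +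
        (2 / V) * (d lam - d lamstar) + 2 * C / V ^ 2)
    (hsmooth : ∀ μ ∈ Pi, ‖μ - lamstar‖ ≤ S → d lamstar ≥ d μ + Ls * ‖μ - lamstar‖ ^ 2)
    (hlow : max (1 / V ^ (1.5 : ℝ)) ((Real.sqrt V + Real.sqrt (V + 4 * Ls * C * V)) / (2 * Ls * V))
        ≤ ‖lam - lamstar‖)
    (hhigh : ‖lam - lamstar‖ ≤ S) :
    ‖lam' - lamstar‖ ≤ ‖lam - lamstar‖ - 1 / V ^ (1.5 : ℝ) := by
  set r := ‖lam - lamstar‖ with hr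
  set r' := ‖lam' - lamstar‖ with hr'
  have hr0 : 0 ≤ r := norm_nonneg _
  have hr'0 : 0 ≤ r' := norm_nonneg _
  have hs0 : (0:ℝ) < Real.sqrt V := Real.sqrt_pos.mpr hV
  set s := Real.sqrt V with hsdef
  set t := Real.sqrt (V + 4 * Ls * C * V) with htdef
  have hs : s ^ 2 = V := Real.sq_sqrt hV.le
  have ht : t ^ 2 = V + 4 * Ls * C * V := Real.sq_sqrt (by positivity)
  have ht0 : 0 ≤ t := Real.sqrt_nonneg _
  have hVpow : V ^ (1.5 : ℝ) = V * s := by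
    rw [show (1.5:ℝ) = 1 + 1/2 by norm_num, Real.rpow_add hV, Real.rpow_one, hsdef,
      Real.sqrt_eq_rpow]
  have hVs : 0 < V * s := mul_pos hV hs0
  have hr1 : 1 / (V * s) ≤ r := by
    have := le_trans (le_max_left _ _) hlow
    rwa [hVpow] at this
  have hrB : (s + t) / (2 * Ls * V) ≤ r := le_trans (le_max_right _ _) hlow
  -- key quadratic inequality
  have h1 : 0 ≤ 2 * Ls * V * r - (s + t) := by
    have h := (div_le_iff₀ (by positivity : (0:ℝ) < 2 * Ls * V)).mp hrB
    linarith
  have h2 : 0 ≤ 2 * Ls * V * r - (s - t) := by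
    nlinarith [mul_pos (mul_pos (by positivity : (0:ℝ) < 2 * Ls) hV) hs0]
  have key : 0 ≤ Ls * V * r ^ 2 - r * s - C := by
    nlinarith [mul_nonneg h1 h2, mul_pos hLs hV]
  -- recursion with smoothness
  have hsm := hsmooth lam hlam hhigh
  have hrec' : r' ^ 2 ≤ r ^ 2 - 2 * Ls * r ^ 2 / V + 2 * C / V ^ 2 := by
    have hd : d lam - d lamstar ≤ -(Ls * r ^ 2) := by linarith
    have : (2 / V) * (d lam - d lamstar) ≤ (2 / V) * (-(Ls * r ^ 2)) := by
      apply mul_le_mul_of_nonneg_left hd (by positivity)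
    calc r' ^ 2 ≤ r ^ 2 + (2 / V) * (d lam - d lamstar) + 2 * C / V ^ 2 := hrec
      _ ≤ r ^ 2 + (2 / V) * (-(Ls * r ^ 2)) + 2 * C / V ^ 2 := by linarith
      _ = r ^ 2 - 2 * Ls * r ^ 2 / V + 2 * C / V ^ 2 := by ring
  have hk : r' ^ 2 ≤ (r - 1 / (V * s)) ^ 2 := by
    have e1 : (r - 1 / (V * s)) ^ 2 = r ^ 2 - 2 * r / (V * s) + 1 / (V * s) ^ 2 := by
      field_simp; ring
    rw [e1]
    have e2 : 2 * r / (V * s) = 2 * r * s / V ^ 2 := by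
      rw [div_eq_div_iff (by positivity) (by positivity)]
      linear_combination (-(2 * r * V)) * hs
    have e3 : (V * s) ^ 2 = V ^ 3 := by linear_combination V ^ 2 * hs
    rw [e2, e3]
    have hkey2 : 2 * Ls * r ^ 2 / V ≥ 2 * r * s / V ^ 2 + 2 * C / V ^ 2 := by
      rw [ge_iff_le, ← add_div, div_le_div_iff₀ (by positivity) (by positivity)]
      linarith [mul_nonneg key hV.le]
    have : (0:ℝ) < 1 / V ^ 3 := by positivity
    linarith
  have hrhs : 0 ≤ r - 1 / (V * s) := by
    have : 1 / (V * s) ≤ r := hr1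
    linarith
  rw [hVpow]
  have := Real.sqrt_le_sqrt hk
  rwa [Real.sqrt_sq hr'0, Real.sqrt_sq hrhs] at this
end

section
/- Suppose ||λ(t+1) - λ*||² ≤ ||λ(t) - λ*||² + (2/V)(d(λ(t)) - d(λ*)) + 2C/V² holds for all t. Then for any δ > 0, letting E = ⌊V||λ(0) - λ*||²/δ⌋, we have d(λ*) - max_{0 ≤ t ≤ E} d(λ(t)) ≤ C/V + δ/2. -/
/-! The potential `‖λ(t) - λ*‖²` is nonnegative. If every iterate up to `E` had
`d(λ*) - d(λ(t)) > C/V + δ/2`, the drift inequality would make the potential drop by more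
than `δ/V` at each of these `E + 1` steps, i.e. by more than `(E + 1) δ / V > ‖λ(0) - λ*‖²`
in total, which is impossible. -/

theorem le_sub_nat_mul_of_forall_lt_succ_le {u : ℕ → ℝ} {ε : ℝ} {N : ℕ}
    (h : ∀ t < N, u (t + 1) ≤ u t - ε) : u N ≤ u 0 - N * ε := by
  induction N with
  | zero => simp
  | succ k ih =>
    have hk := h k k.lt_succ_self
    have ih := ih fun t ht => h t (ht.trans k.lt_succ_self)
    push_cast
    linarith

theorem exists_sub_lt_succ_of_lt_nat_mul {u : ℕ → ℝ} {ε : ℝ} {N : ℕ}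
    (hN : 0 ≤ u N) (h : u 0 < N * ε) : ∃ t < N, u t - ε < u (t + 1) := by
  by_contra! hdrop
  linarith [le_sub_nat_mul_of_forall_lt_succ_le hdrop]

theorem lt_floor_mul_div_add_one_mul {V δ x : ℝ} (hV : 0 < V) (hδ : 0 < δ) :
    x < (⌊V * x / δ⌋₊ + 1 : ℕ) * (δ / V) := by
  have hfloor : V * x / δ < (⌊V * x / δ⌋₊ + 1 : ℕ) := by
    exact_mod_cast Nat.lt_floor_add_one (V * x / δ)
  calc x = V * x / δ * (δ / V) := by field_simp
    _ < _ := by gcongr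

theorem stmt_13 (n : ℕ) (V C δ : ℝ) (hV : 0 < V) (hδ : 0 < δ)
    (d : EuclideanSpace ℝ (Fin n) → ℝ)
    (lam : ℕ → EuclideanSpace ℝ (Fin n)) (lamstar : EuclideanSpace ℝ (Fin n))
    (hrec : ∀ t, ‖lam (t + 1) - lamstar‖ ^ 2 ≤ ‖lam t - lamstar‖ ^ 2 +
        (2 / V) * (d (lam t) - d lamstar) + 2 * C / V ^ 2) :
    d lamstar -
      (Finset.range (⌊V * ‖lam 0 - lamstar‖ ^ 2 / δ⌋₊ + 1)).sup'
        (by simp) (fun t => d (lam t)) ≤ C / V + δ / 2 := by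
  obtain ⟨t, ht, hslow⟩ := exists_sub_lt_succ_of_lt_nat_mul
    (u := fun t => ‖lam t - lamstar‖ ^ 2) (sq_nonneg _) (lt_floor_mul_div_add_one_mul hV hδ)
  have hgap : 0 < d (lam t) - d lamstar + C / V + δ / 2 := by
    have hexpand : (2 / V) * (d (lam t) - d lamstar + C / V + δ / 2) =
        (2 / V) * (d (lam t) - d lamstar) + 2 * C / V ^ 2 + δ / V := by
      field_simp
    have hpos : 0 < (2 / V) * (d (lam t) - d lamstar + C / V + δ / 2) := by
      linarith [hrec t]
    exact (mul_pos_iff_of_pos_left (by positivity)).mp hpos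
  have hsup := Finset.le_sup' (fun t => d (lam t)) (Finset.mem_range.mpr ht)
  linarith
end
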